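/- Differentiability under the integral for the GFF generating functional: let μ be a probability measure on tempered distributions over ℝ⁴ such that for every Schwartz function f there exists α > 0 with ∫ exp(α ⟨ω,f⟩²) dμ(ω) < ∞ (Fernique bound). Then for any finite family f₁,…,f_n of Schwartz functions, the map (z₁,…,z_n) ↦ ∫ exp(i ∑_j z_j ⟨ω, f_j⟩) dμ(ω) is holomorphic on ℂⁿ, with ∂/∂z_j equal to ∫ i⟨ω,f_j⟩ exp(i ∑ z_k ⟨ω,f_k⟩) dμ(ω). -/

import Mathlib

/-!
Write `L_ω z = i ∑ⱼ zⱼ ⟨ω, fⱼ⟩`, a continuous linear functional of `z ∈ ℂⁿ` with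
`‖L_ω‖ ≤ ∑ⱼ |⟨ω, fⱼ⟩|`. Since `r |t| ≤ α t² + r² / 4α`, the Fernique bound makes
`exp (r ‖L_ω‖)` integrable for every `r`. Hence `∑ₘ rᵐ ∫ ‖L_ω‖ᵐ / m! dμ = ∫ exp (r ‖L_ω‖) dμ`
is finite, and integrating `exp (L_ω z) = ∑ₘ (L_ω z)ᵐ / m!` term by term exhibits the generating
functional as the sum of a power series in `z` with infinite radius: joint analyticity
comes without any Hartogs-type argument. The same bound, in the form
`‖exp (L_ω w) • L_ω‖ ≤ exp ((‖w‖ + 1) ‖L_ω‖)`, justifies differentiating under the integral.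
-/

open MeasureTheory

/-- Real Schwartz test functions on ℝ⁴. -/
abbrev TestFunction4 : Type := SchwartzMap (EuclideanSpace ℝ (Fin 4)) ℝ

/-- Tempered distributions (the weak dual of Schwartz space). -/
abbrev FieldConfiguration : Type := WeakDual ℝ TestFunction4

noncomputable instance : MeasurableSpace FieldConfiguration := borel _

instance : BorelSpace FieldConfiguration := ⟨rfl⟩

open scoped NNReal Nat

section IntegralOfPowerSeries

variable {Ω E G : Type*} [MeasurableSpace Ω] {μ : Measure Ω}
  [NormedAddCommGroup E] [NormedSpace ℂ E] [NormedAddCommGroup G] [NormedSpace ℂ G]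

theorem hasFPowerSeriesOnBall_integral {F : Ω → E → G} {P : Ω → FormalMultilinearSeries ℂ E G}
    (hF : ∀ᵐ ω ∂μ, HasFPowerSeriesOnBall (F ω) (P ω) 0 ⊤)
    (hP_int : ∀ m, Integrable (fun ω => P ω m) μ)
    (hP_sum : ∀ r : ℝ≥0, Summable fun m => (∫ ω, ‖P ω m‖ ∂μ) * (r : ℝ) ^ m) :
    HasFPowerSeriesOnBall (fun z => ∫ ω, F ω z ∂μ) (fun m => ∫ ω, P ω m ∂μ) 0 ⊤ := by
  refine ⟨?_, ENNReal.zero_lt_top, fun {y} _ => ?_⟩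
  · refine (FormalMultilinearSeries.radius_eq_top_of_summable_norm _ fun r => ?_).ge
    refine (hP_sum r).of_nonneg_of_le (fun m => by positivity) fun m => ?_
    gcongr
    exact norm_integral_le_integral_norm _
  have hterm_int (m : ℕ) : Integrable (fun ω => P ω m fun _ => y) μ :=
    (ContinuousMultilinearMap.apply ℂ _ G fun _ => y).integrable_comp (hP_int m)
  have hterm_sum : Summable fun m => ∫ ω, ‖P ω m fun _ => y‖ ∂μ := by
    refine (hP_sum ‖y‖₊).of_nonneg_of_le (fun m => integral_nonneg fun _ => norm_nonneg _)
      fun m => ?_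
    rw [coe_nnnorm, ← integral_mul_const]
    refine integral_mono (hterm_int m).norm ((hP_int m).norm.mul_const _) fun ω => ?_
    simpa using (P ω m).le_opNorm fun _ => y
  have hsum := hasSum_integral_of_summable_integral_norm hterm_int hterm_sum
  simp only [ContinuousMultilinearMap.integral_apply (hP_int _), zero_add]
  convert hsum using 1
  refine integral_congr_ae (hF.mono fun ω hω => ?_)
  simpa using (hω.hasSum (y := y) (by simp)).tsum_eq.symm
end IntegralOfPowerSeries

section CexpOfLinear

variable {E : Type*} [NormedAddCommGroup E] [NormedSpace ℂ E]

theorem norm_cexp_apply_le (ℓ : StrongDual ℂ E) (z : E) :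
    ‖Complex.exp (ℓ z)‖ ≤ Real.exp (‖ℓ‖ * ‖z‖) := by
  rw [Complex.norm_exp]
  exact Real.exp_le_exp.2 ((Complex.re_le_norm _).trans (ℓ.le_opNorm z))

theorem norm_cexp_apply_smul_le (ℓ : StrongDual ℂ E) (z : E) :
    ‖Complex.exp (ℓ z) • ℓ‖ ≤ Real.exp ((‖z‖ + 1) * ‖ℓ‖) := by
  rw [norm_smul, add_mul, one_mul, Real.exp_add, mul_comm ‖z‖]
  gcongr
  · exact norm_cexp_apply_le ℓ z
  · linarith [Real.add_one_le_exp ‖ℓ‖]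

theorem norm_expSeries_compContinuousLinearMap_le (ℓ : StrongDual ℂ E) (m : ℕ) :
    ‖(NormedSpace.expSeries ℂ ℂ).compContinuousLinearMap ℓ m‖ ≤ ‖ℓ‖ ^ m / m ! := by
  refine (ContinuousMultilinearMap.norm_compContinuousLinearMap_le _ _).trans_eq ?_
  simp [NormedSpace.expSeries, norm_smul, div_eq_inv_mul]

variable {Ω : Type*} [MeasurableSpace Ω] {μ : Measure Ω} {L : Ω → StrongDual ℂ E}

theorem integrable_pow_div_factorial_of_integrable_exp (hL : AEStronglyMeasurable L μ)
    {r : ℝ} (hr : 0 ≤ r) (hexp : Integrable (fun ω => Real.exp (r * ‖L ω‖)) μ) (m : ℕ) :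
    Integrable (fun ω => (r * ‖L ω‖) ^ m / m !) μ := by
  refine hexp.mono' (by fun_prop) (ae_of_all _ fun ω => ?_)
  rw [Real.norm_of_nonneg (by positivity)]
  exact Real.pow_div_factorial_le_exp _ (by positivity) m

theorem summable_integral_pow_div_factorial (hL : AEStronglyMeasurable L μ)
    {r : ℝ} (hr : 0 ≤ r) (hexp : Integrable (fun ω => Real.exp (r * ‖L ω‖)) μ) :
    Summable fun m : ℕ => ∫ ω, (r * ‖L ω‖) ^ m / m ! ∂μ := by
  have hint := integrable_pow_div_factorial_of_integrable_exp hL hr hexp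
  refine summable_of_sum_range_le (c := ∫ ω, Real.exp (r * ‖L ω‖) ∂μ)
    (fun m => integral_nonneg fun ω => by positivity) fun N => ?_
  rw [← integral_finsetSum _ fun m _ => hint m]
  exact integral_mono (integrable_finsetSum _ fun m _ => hint m) hexp fun ω =>
    Real.sum_le_exp_of_nonneg (by positivity) N

theorem hasFPowerSeriesOnBall_cexp_apply (ℓ : StrongDual ℂ E) :
    HasFPowerSeriesOnBall (fun z => Complex.exp (ℓ z))
      ((NormedSpace.expSeries ℂ ℂ).compContinuousLinearMap ℓ) 0 ⊤ := by
  have h := NormedSpace.exp_hasFPowerSeriesOnBall (𝕂 := ℂ) (𝔸 := ℂ)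
  rw [← ℓ.map_zero] at h
  simpa [Function.comp_def, ← Complex.exp_eq_exp_ℂ, ENNReal.top_div_of_ne_top enorm_ne_top]
    using h.compContinuousLinearMap

theorem hasFPowerSeriesOnBall_integral_cexp_apply (hL : AEStronglyMeasurable L μ)
    (hexp : ∀ r, 0 ≤ r → Integrable (fun ω => Real.exp (r * ‖L ω‖)) μ) :
    HasFPowerSeriesOnBall (fun z => ∫ ω, Complex.exp (L ω z) ∂μ)
      (fun m => ∫ ω, (NormedSpace.expSeries ℂ ℂ).compContinuousLinearMap (L ω) m ∂μ) 0 ⊤ := by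
  have hP_le := fun ω => norm_expSeries_compContinuousLinearMap_le (L ω)
  have hP_int (m : ℕ) :
      Integrable (fun ω => (NormedSpace.expSeries ℂ ℂ).compContinuousLinearMap (L ω) m) μ := by
    have hcont : Continuous fun ℓ : StrongDual ℂ E =>
        (NormedSpace.expSeries ℂ ℂ).compContinuousLinearMap ℓ m :=
      (ContinuousMultilinearMap.compContinuousLinearMapLRight _).cont.comp
        (continuous_pi fun _ => continuous_id)
    refine (integrable_pow_div_factorial_of_integrable_exp hL zero_le_one (hexp 1 zero_le_one)
      m).mono' (hcont.comp_aestronglyMeasurable hL) (ae_of_all _ fun ω => ?_)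
    simpa using hP_le ω m
  refine hasFPowerSeriesOnBall_integral
    (ae_of_all _ fun ω => hasFPowerSeriesOnBall_cexp_apply (L ω)) hP_int fun r => ?_
  refine (summable_integral_pow_div_factorial hL r.2 (hexp r r.2)).of_nonneg_of_le
    (fun m => by positivity) fun m => ?_
  rw [← integral_mul_const]
  refine integral_mono ((hP_int m).norm.mul_const _)
    (integrable_pow_div_factorial_of_integrable_exp hL r.2 (hexp r r.2) m) fun ω => ?_
  calc _ ≤ ‖L ω‖ ^ m / m ! * r ^ m := by gcongr; exact hP_le ω m
    _ = ((r : ℝ) * ‖L ω‖) ^ m / m ! := by rw [mul_pow]; ring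

theorem integrable_cexp_apply (hL : AEStronglyMeasurable L μ)
    (hexp : ∀ r, 0 ≤ r → Integrable (fun ω => Real.exp (r * ‖L ω‖)) μ) (z : E) :
    Integrable (fun ω => Complex.exp (L ω z)) μ := by
  refine (hexp ‖z‖ (norm_nonneg z)).mono'
    (Complex.continuous_exp.comp_aestronglyMeasurable
      ((ContinuousLinearMap.apply ℂ ℂ z).continuous.comp_aestronglyMeasurable hL))
    (ae_of_all _ fun ω => ?_)
  simpa [mul_comm] using norm_cexp_apply_le (L ω) z

theorem integrable_cexp_apply_smul (hL : AEStronglyMeasurable L μ)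
    (hexp : ∀ r, 0 ≤ r → Integrable (fun ω => Real.exp (r * ‖L ω‖)) μ) (z : E) :
    Integrable (fun ω => Complex.exp (L ω z) • L ω) μ :=
  (hexp (‖z‖ + 1) (by positivity)).mono'
    ((integrable_cexp_apply hL hexp z).aestronglyMeasurable.smul hL)
    (ae_of_all _ fun ω => norm_cexp_apply_smul_le (L ω) z)

theorem hasFDerivAt_integral_cexp_apply (hL : AEStronglyMeasurable L μ)
    (hexp : ∀ r, 0 ≤ r → Integrable (fun ω => Real.exp (r * ‖L ω‖)) μ) (z : E) :
    HasFDerivAt (fun w => ∫ ω, Complex.exp (L ω w) ∂μ)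
      (∫ ω, Complex.exp (L ω z) • L ω ∂μ) z := by
  refine hasFDerivAt_integral_of_dominated_of_fderiv_le (Metric.ball_mem_nhds z one_pos)
    (.of_forall fun w => (integrable_cexp_apply hL hexp w).aestronglyMeasurable)
    (integrable_cexp_apply hL hexp z) (integrable_cexp_apply_smul hL hexp z).aestronglyMeasurable
    (ae_of_all _ fun ω w hw => ?_) (hexp (‖z‖ + 2) (by positivity))
    (ae_of_all _ fun ω w _ => (L ω).hasFDerivAt.cexp)
  have hw' : ‖w‖ ≤ ‖z‖ + 1 := by
    have := norm_le_norm_add_norm_sub' w z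
    linarith [mem_ball_iff_norm.1 hw]
  exact (norm_cexp_apply_smul_le (L ω) w).trans
    (Real.exp_le_exp.2 (mul_le_mul_of_nonneg_right (by linarith) (norm_nonneg _)))

end CexpOfLinear

theorem Real.exp_mul_sum_abs_le {ι : Type*} [Fintype ι] (x : ι → ℝ) {r : ℝ} (hr : 0 ≤ r) :
    Real.exp (r * ∑ i, |x i|) ≤ 1 + ∑ i, Real.exp (Fintype.card ι * r * |x i|) := by
  cases isEmpty_or_nonempty ι
  · simp -- the summand `1` is only needed for the empty family
  obtain ⟨i₀, -, hi₀⟩ := Finset.exists_max_image Finset.univ (fun i => |x i|) Finset.univ_nonempty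
  have hsum : ∑ i, |x i| ≤ Fintype.card ι * |x i₀| := by
    simpa using Finset.sum_le_card_nsmul _ _ _ hi₀
  calc Real.exp (r * ∑ i, |x i|) ≤ Real.exp (r * (Fintype.card ι * |x i₀|)) := by gcongr
    _ = Real.exp (Fintype.card ι * r * |x i₀|) := by ring_nf
    _ ≤ ∑ i, Real.exp (Fintype.card ι * r * |x i|) :=
        Finset.single_le_sum (f := fun i => Real.exp (Fintype.card ι * r * |x i|))
          (fun i _ => (Real.exp_pos _).le) (Finset.mem_univ i₀)
    _ ≤ _ := le_add_of_nonneg_left zero_le_one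

theorem Real.mul_abs_le_mul_sq_add {α : ℝ} (hα : 0 < α) (r x : ℝ) :
    r * |x| ≤ α * x ^ 2 + r ^ 2 / (4 * α) := by
  have key : α * x ^ 2 + r ^ 2 / (4 * α) - r * |x| = (2 * α * |x| - r) ^ 2 / (4 * α) := by
    field_simp
    rw [← sq_abs x]
    ring
  nlinarith [key, div_nonneg (sq_nonneg (2 * α * |x| - r)) (by positivity : (0:ℝ) ≤ 4 * α)]

section ExponentialMoments

variable {Ω : Type*} [MeasurableSpace Ω] {μ : Measure Ω}

theorem integrable_exp_mul_abs_of_integrable_exp_mul_sq {X : Ω → ℝ} (hX : AEMeasurable X μ)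
    {α : ℝ} (hα : 0 < α) (h : Integrable (fun ω => Real.exp (α * X ω ^ 2)) μ) (r : ℝ) :
    Integrable (fun ω => Real.exp (r * |X ω|)) μ := by
  refine (h.const_mul (Real.exp (r ^ 2 / (4 * α)))).mono' (by fun_prop)
    (ae_of_all _ fun ω => ?_)
  rw [Real.norm_of_nonneg (Real.exp_nonneg _), ← Real.exp_add, Real.exp_le_exp]
  linarith [Real.mul_abs_le_mul_sq_add hα r (X ω)]

theorem integrable_exp_mul_sum_abs [IsFiniteMeasure μ] {ι : Type*} [Fintype ι]
    {X : ι → Ω → ℝ} (hX : ∀ i, AEMeasurable (X i) μ)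
    (hexp : ∀ i r, 0 ≤ r → Integrable (fun ω => Real.exp (r * |X i ω|)) μ) {r : ℝ} (hr : 0 ≤ r) :
    Integrable (fun ω => Real.exp (r * ∑ i, |X i ω|)) μ := by
  refine ((integrable_const 1).add (integrable_finsetSum Finset.univ fun i _ =>
    hexp i (Fintype.card ι * r) (by positivity))).mono' (by fun_prop) (ae_of_all _ fun ω => ?_)
  rw [Real.norm_of_nonneg (Real.exp_nonneg _)]
  simpa using Real.exp_mul_sum_abs_le (fun i => X i ω) hr

end ExponentialMoments

section FiniteFamily

variable {ι : Type*} [Fintype ι]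

noncomputable def iPairing (x : ι → ℝ) : StrongDual ℂ (ι → ℂ) :=
  Complex.I • ∑ j, (x j : ℂ) • ContinuousLinearMap.proj j

theorem iPairing_apply (x : ι → ℝ) (z : ι → ℂ) :
    iPairing x z = Complex.I * ∑ j, z j * x j := by
  simp [iPairing, mul_comm]

theorem norm_iPairing_le (x : ι → ℝ) : ‖iPairing x‖ ≤ ∑ j, |x j| := by
  refine ContinuousLinearMap.opNorm_le_bound _ (by positivity) fun z => ?_
  rw [iPairing_apply, norm_mul, Complex.norm_I, one_mul, Finset.sum_mul]
  refine (norm_sum_le _ _).trans (Finset.sum_le_sum fun j _ => ?_)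
  rw [norm_mul, Complex.norm_real, Real.norm_eq_abs, mul_comm]
  gcongr
  exact norm_le_pi_norm z j

theorem continuous_iPairing : Continuous (iPairing (ι := ι)) := by
  unfold iPairing
  fun_prop

variable {Ω : Type*} [MeasurableSpace Ω] {μ : Measure Ω} {X : ι → Ω → ℝ}

theorem aestronglyMeasurable_iPairing (hX : ∀ j, AEMeasurable (X j) μ) :
    AEStronglyMeasurable (fun ω => iPairing (fun j => X j ω)) μ :=
  continuous_iPairing.comp_aestronglyMeasurable (aemeasurable_pi_lambda _ hX).aestronglyMeasurable

variable [IsFiniteMeasure μ]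

theorem integrable_exp_mul_norm_iPairing (hX : ∀ j, AEMeasurable (X j) μ)
    (hexp : ∀ j r, 0 ≤ r → Integrable (fun ω => Real.exp (r * |X j ω|)) μ) {r : ℝ} (hr : 0 ≤ r) :
    Integrable (fun ω => Real.exp (r * ‖iPairing (fun j => X j ω)‖)) μ := by
  refine (integrable_exp_mul_sum_abs hX hexp hr).mono'
    (((aestronglyMeasurable_iPairing hX).norm.const_mul r).aemeasurable.exp.aestronglyMeasurable)
    (ae_of_all _ fun ω => ?_)
  rw [Real.norm_of_nonneg (Real.exp_nonneg _), Real.exp_le_exp]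
  exact mul_le_mul_of_nonneg_left (norm_iPairing_le _) hr

theorem analyticAt_integral_cexp_I_mul_sum (hX : ∀ j, AEMeasurable (X j) μ)
    (hexp : ∀ j r, 0 ≤ r → Integrable (fun ω => Real.exp (r * |X j ω|)) μ) (z : ι → ℂ) :
    AnalyticAt ℂ
      (fun z : ι → ℂ => ∫ ω, Complex.exp (Complex.I * ∑ j, z j * (X j ω : ℂ)) ∂μ) z := by
  have hps := hasFPowerSeriesOnBall_integral_cexp_apply (aestronglyMeasurable_iPairing hX)
    fun r hr => integrable_exp_mul_norm_iPairing hX hexp hr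
  simp only [iPairing_apply] at hps
  exact hps.analyticAt_of_mem (by simp)

theorem hasDerivAt_integral_cexp_I_mul_sum_update [DecidableEq ι]
    (hX : ∀ j, AEMeasurable (X j) μ)
    (hexp : ∀ j r, 0 ≤ r → Integrable (fun ω => Real.exp (r * |X j ω|)) μ)
    (z : ι → ℂ) (j : ι) :
    HasDerivAt (fun w : ℂ =>
        ∫ ω, Complex.exp (Complex.I * ∑ k, Function.update z j w k * (X k ω : ℂ)) ∂μ)
      (∫ ω, Complex.I * X j ω * Complex.exp (Complex.I * ∑ k, z k * (X k ω : ℂ)) ∂μ) (z j) := by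
  have hL := aestronglyMeasurable_iPairing hX
  have hexpL := fun r (hr : 0 ≤ r) => integrable_exp_mul_norm_iPairing hX hexp hr
  have h := (hasFDerivAt_integral_cexp_apply hL hexpL (Function.update z j (z j))).comp_hasDerivAt
    (z j) (hasDerivAt_update z j (z j))
  rw [Function.update_eq_self, ContinuousLinearMap.integral_apply
    (integrable_cexp_apply_smul hL hexpL z)] at h
  refine (h.congr_deriv ?_).congr_of_eventuallyEq (.of_forall fun w => ?_)
  · refine integral_congr_ae (ae_of_all _ fun ω => ?_)
    simp [iPairing_apply, Pi.single_apply, mul_comm]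
  · simp only [Function.comp_apply, iPairing_apply]

end FiniteFamily

theorem generating_functional_holomorphic
    (μ : Measure FieldConfiguration) [IsProbabilityMeasure μ]
    (hFernique : ∀ f : TestFunction4, ∃ α : ℝ, 0 < α ∧
      Integrable (fun ω => Real.exp (α * (ω f) ^ 2)) μ)
    (n : ℕ) (f : Fin n → TestFunction4) :
    (∀ z : Fin n → ℂ, AnalyticAt ℂ
      (fun z : Fin n → ℂ =>
        ∫ ω, Complex.exp (Complex.I * ∑ j, z j * ((ω (f j) : ℝ) : ℂ)) ∂μ) z) ∧
    (∀ (z : Fin n → ℂ) (j : Fin n),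
      HasDerivAt (fun w : ℂ =>
          ∫ ω, Complex.exp (Complex.I *
            ∑ k, Function.update z j w k * ((ω (f k) : ℝ) : ℂ)) ∂μ)
        (∫ ω, Complex.I * ((ω (f j) : ℝ) : ℂ) *
          Complex.exp (Complex.I * ∑ k, z k * ((ω (f k) : ℝ) : ℂ)) ∂μ)
        (z j)) := by
  have hmeas (j : Fin n) : AEMeasurable (fun ω : FieldConfiguration => ω (f j)) μ :=
    (WeakDual.eval_continuous (f j)).measurable.aemeasurable
  have hexp (j : Fin n) (r : ℝ) (_ : 0 ≤ r) :
      Integrable (fun ω : FieldConfiguration => Real.exp (r * |ω (f j)|)) μ := by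
    obtain ⟨α, hα, hint⟩ := hFernique (f j)
    exact integrable_exp_mul_abs_of_integrable_exp_mul_sq (hmeas j) hα hint r
  exact ⟨analyticAt_integral_cexp_I_mul_sum hmeas hexp,
    hasDerivAt_integral_cexp_I_mul_sum_update hmeas hexp⟩
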